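/- Let $\mathfrak{g}$ be a Lie algebra with $\mathrm{Ad}$-invariant Finsler norm satisfying the normalization $|[x,y]| \le 2|x|\,|y|$. Define the sectional curvature of a 2-plane $\pi \subset \mathfrak{g}$ by $\sec(\pi) = \frac{1}{4}\max_{x,y\in\pi, |x|=|y|=1} \min_{\varphi\in N_y} \varphi([x,[y,x]])$. Then $0 \le \sec(\pi) \le 1$. -/

import Mathlib

/-- The sectional curvature of a 2-plane `π`:
`sec(π) = ¼ max_{x,y ∈ π, n x = n y = 1} min_{φ ∈ N_y} φ [x,[y,x]]`
(max and min are expressed via `sSup`/`sInf`). -/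
noncomputable def secForm {g : Type*} [AddCommGroup g] [Module ℝ g]
    (br : g →ₗ[ℝ] g →ₗ[ℝ] g) (n : g → ℝ) (π : Submodule ℝ g) : ℝ :=
  1 / 4 * sSup {c : ℝ | ∃ x ∈ π, ∃ y ∈ π, n x = 1 ∧ n y = 1 ∧
    c = sInf {r : ℝ | ∃ φ : g →ₗ[ℝ] ℝ, (∀ w : g, φ w ≤ n w)
      ∧ φ y = n y ∧ φ (br x (br y x)) = r}}

/-- Hahn–Banach: there is a norming functional. -/
lemma exists_norming {g : Type*} [AddCommGroup g] [Module ℝ g]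
    (n : g → ℝ) (hnonneg : ∀ x : g, 0 ≤ n x)
    (hadd : ∀ x y : g, n (x + y) ≤ n x + n y)
    (hhom : ∀ (c : ℝ) (x : g), 0 ≤ c → n (c • x) = c * n x)
    {y : g} (hy : y ≠ 0) :
    ∃ φ : g →ₗ[ℝ] ℝ, (∀ w : g, φ w ≤ n w) ∧ φ y = n y := by
  have hdom : ∀ x : (LinearPMap.mkSpanSingleton y (n y) hy : g →ₗ.[ℝ] ℝ).domain,
      (LinearPMap.mkSpanSingleton y (n y) hy : g →ₗ.[ℝ] ℝ) x ≤ n x := by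
    rintro ⟨x, hx⟩
    have hx' : x ∈ Submodule.span ℝ {y} := hx
    obtain ⟨c, rfl⟩ := Submodule.mem_span_singleton.1 hx'
    have happ : (LinearPMap.mkSpanSingleton y (n y) hy : g →ₗ.[ℝ] ℝ) ⟨c • y, hx⟩ = c • n y :=
      LinearPMap.mkSpanSingleton'_apply _ _ _ c hx
    rw [happ]
    rcases le_or_gt 0 c with hc | hc
    · rw [hhom c y hc]; simp [smul_eq_mul]
    · have : c • n y ≤ 0 := by
        have := hnonneg y
        simpa [smul_eq_mul] using mul_nonpos_of_nonpos_of_nonneg hc.le this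
      exact this.trans (hnonneg _)
  obtain ⟨φ, hφ1, hφ2⟩ := exists_extension_of_le_sublinear
    (LinearPMap.mkSpanSingleton y (n y) hy) n (fun c hc x => hhom c x hc.le) hadd hdom
  refine ⟨φ, hφ2, ?_⟩
  have h1 := hφ1 ⟨y, Submodule.mem_span_singleton_self y⟩
  have h2 := LinearPMap.mkSpanSingleton_apply ℝ ℝ (σ := RingHom.id ℝ) hy (n y)
  simp only [h2] at h1
  exact h1

/-- with the normalization `n [x,y] ≤ 2 n x n y` for the `Ad`-invariant
Finsler norm `n`, the sectional curvature of any 2-plane `π` satisfies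
`0 ≤ sec(π) ≤ 1`. -/
theorem secForm_nonneg_le_one
    {g : Type*} [NormedAddCommGroup g] [NormedSpace ℝ g] [FiniteDimensional ℝ g]
    (br : g →ₗ[ℝ] g →ₗ[ℝ] g)
    (halt : ∀ a : g, br a a = 0)
    (hjacobi : ∀ a b c : g, br a (br b c) + br b (br c a) + br c (br a b) = 0)
    (n : g → ℝ)
    (hnonneg : ∀ x : g, 0 ≤ n x)
    (hadd : ∀ x y : g, n (x + y) ≤ n x + n y)
    (hhom : ∀ (c : ℝ) (x : g), 0 ≤ c → n (c • x) = c * n x)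
    (hdeg : ∀ x : g, n x = 0 ↔ x = 0)
    (hinv : ∀ (x v : g) (s : ℝ),
      n ((NormedSpace.exp (s • LinearMap.toContinuousLinearMap (br x))) v) = n v)
    (hnormalized : ∀ x y : g, n (br x y) ≤ 2 * n x * n y)
    (π : Submodule ℝ g) (hπ : Module.finrank ℝ π = 2) :
    0 ≤ secForm br n π ∧ secForm br n π ≤ 1 := by
  set S : Set ℝ := {c : ℝ | ∃ x ∈ π, ∃ y ∈ π, n x = 1 ∧ n y = 1 ∧
    c = sInf {r : ℝ | ∃ φ : g →ₗ[ℝ] ℝ, (∀ w : g, φ w ≤ n w)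
      ∧ φ y = n y ∧ φ (br x (br y x)) = r}} with hS
  -- a unit vector in π
  have hπne : ∃ v : g, v ∈ π ∧ v ≠ 0 := by
    by_contra h
    push_neg at h
    have : π = ⊥ := by
      ext v; simp only [Submodule.mem_bot]
      exact ⟨fun hv => h v hv, fun hv => hv ▸ π.zero_mem⟩
    rw [this] at hπ
    simp at hπ
  obtain ⟨v, hvπ, hv0⟩ := hπne
  have hnv : 0 < n v := lt_of_le_of_ne (hnonneg v) (fun h => hv0 ((hdeg v).1 h.symm))
  set y : g := (n v)⁻¹ • v with hy
  have hyπ : y ∈ π := π.smul_mem _ hvπ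
  have hny : n y = 1 := by
    rw [hy, hhom _ _ (inv_nonneg.2 hnv.le), inv_mul_cancel₀ hnv.ne']
  have hy0 : y ≠ 0 := fun h => by rw [h, (hdeg (0:g)).2 rfl] at hny; norm_num at hny
  -- every element of S is ≤ 4
  have hub : ∀ c ∈ S, c ≤ 4 := by
    rintro c ⟨x, hxπ, z, hzπ, hnx, hnz, rfl⟩
    set T : Set ℝ := {r : ℝ | ∃ φ : g →ₗ[ℝ] ℝ, (∀ w : g, φ w ≤ n w)
      ∧ φ z = n z ∧ φ (br x (br z x)) = r} with hT
    have hz0 : z ≠ 0 := fun h => by rw [h, (hdeg (0:g)).2 rfl] at hnz; norm_num at hnz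
    obtain ⟨φ, hφle, hφz⟩ := exists_norming n hnonneg hadd hhom hz0
    have hTne : T.Nonempty := ⟨φ (br x (br z x)), φ, hφle, hφz, rfl⟩
    have hTle : ∀ r ∈ T, r ≤ 4 := by
      rintro r ⟨ψ, hψle, hψz, rfl⟩
      calc ψ (br x (br z x)) ≤ n (br x (br z x)) := hψle _
        _ ≤ 2 * n x * n (br z x) := hnormalized _ _
        _ ≤ 2 * n x * (2 * n z * n x) := by
            have := hnormalized z x
            nlinarith [hnonneg x]
        _ = 4 := by rw [hnx, hnz]; ring
    rcases em (BddBelow T) with hb | hb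
    · obtain ⟨r, hr⟩ := hTne
      exact (csInf_le hb hr).trans (hTle r hr)
    · rw [Real.sInf_of_not_bddBelow hb]; norm_num
  have hbdd : BddAbove S := ⟨4, hub⟩
  -- 0 ∈ S via x = y
  have h0S : (0 : ℝ) ∈ S := by
    refine ⟨y, hyπ, y, hyπ, hny, hny, ?_⟩
    have hTeq : {r : ℝ | ∃ φ : g →ₗ[ℝ] ℝ, (∀ w : g, φ w ≤ n w)
        ∧ φ y = n y ∧ φ (br y (br y y)) = r} = {0} := by
      ext r
      simp only [Set.mem_setOf_eq, Set.mem_singleton_iff]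
      constructor
      · rintro ⟨φ, hφle, hφy, rfl⟩
        rw [halt y]
        simp
      · rintro rfl
        obtain ⟨φ, hφle, hφy⟩ := exists_norming n hnonneg hadd hhom hy0
        exact ⟨φ, hφle, hφy, by rw [halt y]; simp⟩
    rw [hTeq, csInf_singleton]
  constructor
  · have : (0:ℝ) ≤ sSup S := le_csSup hbdd h0S
    unfold secForm
    rw [← hS]
    linarith
  · have : sSup S ≤ 4 := csSup_le ⟨0, h0S⟩ hub
    unfold secForm
    rw [← hS]
    linarith
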